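/- arXiv:1406.2597 — 2 statements merged into one kernel-verified Lean document; each statement's English description precedes it below -/
import Mathlib

section
/- For every B ⊆ ℕ there exists a subset A ⊆ B such that A has asymptotic density and d(A) = λ̲(B). -/
open Filter Topology

noncomputable section

/-- The space `ℓ∞` of bounded real sequences. -/
abbrev EllInfty : Type := lp (fun _ : ℕ => ℝ) ⊤

/-- The characteristic sequence of a set `A ⊆ ℕ` (as a plain function). -/
def chiFun (A : Set ℕ) : ℕ → ℝ := A.indicator 1

lemma chiFun_memℓp (A : Set ℕ) : Memℓp (chiFun A) ⊤ := by
  apply memℓp_infty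
  refine ⟨1, ?_⟩
  rintro r ⟨n, rfl⟩
  by_cases h : n ∈ A <;> simp [chiFun, Set.indicator, h]

/-- The characteristic sequence of a set `A ⊆ ℕ` as an element of `ℓ∞`. -/
def chi (A : Set ℕ) : EllInfty := ⟨chiFun A, chiFun_memℓp A⟩

/-- `A(n) = |A ∩ {1,…,n}|` (as a real number). -/
def count (A : Set ℕ) (n : ℕ) : ℝ := ∑ k ∈ Finset.Icc 1 n, chiFun A k

/-- `A` has asymptotic density `d`, i.e. `A(n)/n → d`. -/
def HasDensity (A : Set ℕ) (d : ℝ) : Prop :=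
  Tendsto (fun n => count A n / n) atTop (𝓝 d)

/-- A density measure: a finitely additive measure `μ : 𝒫(ℕ) → [0,1]` with `μ(ℕ) = 1`
which extends the asymptotic density. -/
def IsDensityMeasure (μ : Set ℕ → ℝ) : Prop :=
  (∀ A B : Set ℕ, Disjoint A B → μ (A ∪ B) = μ A + μ B) ∧
  (∀ A : Set ℕ, μ A ∈ Set.Icc (0 : ℝ) 1) ∧
  μ Set.univ = 1 ∧
  (∀ A d, HasDensity A d → μ A = d)

/-- The sequence of Cesàro averages `(x₁ + … + xₙ)/n`. -/
def cesaroAvg (x : ℕ → ℝ) (n : ℕ) : ℝ := (∑ i ∈ Finset.Icc 1 n, x i) / n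

/-- `x` has Cesàro mean `c`. -/
def HasCesaro (x : ℕ → ℝ) (c : ℝ) : Prop := Tendsto (cesaroAvg x) atTop (𝓝 c)

/-- A functional on `ℓ∞` is positive if it is nonnegative on nonnegative sequences. -/
def IsPositiveFunctional (f : EllInfty → ℝ) : Prop :=
  ∀ x : EllInfty, (∀ n, 0 ≤ x n) → 0 ≤ f x

/-- A functional on `ℓ∞` extends the Cesàro mean. -/
def ExtendsCesaro (f : EllInfty → ℝ) : Prop :=
  ∀ (x : EllInfty) (c : ℝ), HasCesaro (⇑x) c → f x = c

/-- The set of positive continuous linear functionals on `ℓ∞` extending the Cesàro mean. -/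
def Cesex : Set (EllInfty →L[ℝ] ℝ) :=
  {f | IsPositiveFunctional f ∧ ExtendsCesaro f}

/-- `f_C(x) = sup { f(x) : f ∈ Cesex }`. -/
def fC (x : EllInfty) : ℝ := sSup ((fun f : EllInfty →L[ℝ] ℝ => f x) '' Cesex)

/-- `Θ_{θ,n}(x) = (Σ_{θn < i ≤ n} x_i) / (n(1-θ))`. -/
def Theta (x : ℕ → ℝ) (θ : ℝ) (n : ℕ) : ℝ :=
  (∑ i ∈ Finset.Icc 1 n, if θ * n < (i : ℝ) then x i else 0) / (n * (1 - θ))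

/-- `Θ_θ(x) = limsup_{n → ∞} Θ_{θ,n}(x)`. -/
def ThetaSup (x : ℕ → ℝ) (θ : ℝ) : ℝ := limsup (Theta x θ) atTop

/-- `t(x) = lim_{θ → 1⁻} Θ_θ(x)`. -/
def tFun (x : ℕ → ℝ) : ℝ := limUnder (𝓝[<] (1 : ℝ)) (ThetaSup x)

/-- `A_α(n) = Σ_{k ∈ A, k ≤ n} k^α`. -/
def aSum (A : Set ℕ) (α : ℝ) (n : ℕ) : ℝ :=
  ∑ k ∈ Finset.Icc 1 n, chiFun A k * (k : ℝ) ^ α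

/-- The upper `α`-density `d̄_α(A) = limsup_{n→∞} A_α(n)/ℕ_α(n)`. -/
def upperADens (A : Set ℕ) (α : ℝ) : ℝ :=
  limsup (fun n => aSum A α n / aSum Set.univ α n) atTop

/-- The lower `α`-density `d̲_α(A) = liminf_{n→∞} A_α(n)/ℕ_α(n)`. -/
def lowerADens (A : Set ℕ) (α : ℝ) : ℝ :=
  liminf (fun n => aSum A α n / aSum Set.univ α n) atTop

/-- `d̄_∞(A) = lim_{α→∞} d̄_α(A)`. -/
def dInftyUpper (A : Set ℕ) : ℝ := limUnder (atTop : Filter ℝ) (upperADens A)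

/-- `d̲_∞(A) = lim_{α→∞} d̲_α(A)`. -/
def dInftyLower (A : Set ℕ) : ℝ := limUnder (atTop : Filter ℝ) (lowerADens A)

/-- The quotient `(A(n) - A(⌊θn⌋))/(n - θn)` appearing in the Pólya density. -/
def polyaQuot (A : Set ℕ) (θ : ℝ) (n : ℕ) : ℝ :=
  (count A n - count A ⌊θ * n⌋₊) / (n - θ * n)

/-- The upper Pólya density `p̄(A)`. -/
def pUpper (A : Set ℕ) : ℝ :=
  limUnder (𝓝[<] (1 : ℝ)) (fun θ => limsup (polyaQuot A θ) atTop)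

/-- The lower Pólya density `p̲(A)`. -/
def pLower (A : Set ℕ) : ℝ :=
  limUnder (𝓝[<] (1 : ℝ)) (fun θ => liminf (polyaQuot A θ) atTop)

/-- `λ̄(A) = sup { μ(A) : μ a density measure }`. -/
def lamUpper (A : Set ℕ) : ℝ := sSup {r | ∃ μ, IsDensityMeasure μ ∧ μ A = r}

/-- `λ̲(A) = inf { μ(A) : μ a density measure }`. -/
def lamLower (A : Set ℕ) : ℝ := sInf {r | ∃ μ, IsDensityMeasure μ ∧ μ A = r}

/-- `d̄*(A) = inf { d(B) : B ⊇ A, B ∈ 𝒟 }`. -/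
def dUpperStar (A : Set ℕ) : ℝ := sInf {r | ∃ B, A ⊆ B ∧ HasDensity B r}

/-- `d̲*(A) = sup { d(B) : B ⊆ A, B ∈ 𝒟 }`. -/
def dLowerStar (A : Set ℕ) : ℝ := sSup {r | ∃ B, B ⊆ A ∧ HasDensity B r}

/-- The `ℱ`-limit of a (bounded) real sequence along an ultrafilter `ℱ`:
the unique `L` with `Tendsto x ℱ (𝓝 L)` (when it exists). -/
def ulim (F : Ultrafilter ℕ) (x : ℕ → ℝ) : ℝ := limUnder (F : Filter ℕ) x

/-- An ultrafilter is free (non-principal) iff it contains all cofinite sets. -/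
def IsFreeUltrafilter (F : Ultrafilter ℕ) : Prop := (F : Filter ℕ) ≤ Filter.cofinite

/-- The set of positive functionals extending Cesàro mean, inside the weak-* dual of `ℓ∞`. -/
def CesexW : Set (WeakDual ℝ EllInfty) :=
  {f | (∀ x : EllInfty, (∀ n, 0 ≤ x n) → 0 ≤ f x) ∧
    ∀ (x : EllInfty) (c : ℝ), HasCesaro (⇑x) c → f x = c}

/-!
Density measures can be built as ultrafilter limits of the window averages
`(B(n) - B(⌊θn⌋)) / (n - ⌊θn⌋)`; so if infinitely many windows of `B` had relative size `< c`, some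
density measure would give `B` measure `≤ c`. Hence, for `c < λ̲(B)` and `θ < 1`, all late windows
of `B` have relative size `≥ c`. Now take elements of `B` greedily as long as the count stays
`≤ λ̲(B) · n`: past the last time `m` the greedy set was nearly full it takes every element of `B`,
and chaining windows `n, ⌊θn⌋, ⌊θ²n⌋, …` down to `m` shows that `B` has `≳ λ̲(B) (n - m)` elements
in `(m, n]`, so the greedy set has density exactly `λ̲(B)`.
-/

lemma chiFun_nonneg (A : Set ℕ) (k : ℕ) : 0 ≤ chiFun A k :=
  Set.indicator_nonneg (fun _ _ => zero_le_one) k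

lemma chiFun_le_one (A : Set ℕ) (k : ℕ) : chiFun A k ≤ 1 :=
  Set.indicator_le_self' (fun _ _ => zero_le_one) k

lemma count_sub_count {A : Set ℕ} {m n : ℕ} (h : m ≤ n) :
    count A n - count A m = ∑ k ∈ Finset.Ioc m n, chiFun A k := by
  have hIoc (k : ℕ) : count A k = ∑ i ∈ Finset.Ioc 0 k, chiFun A i := by
    rw [← Finset.Icc_add_one_left_eq_Ioc]; rfl
  rw [hIoc, hIoc, ← Finset.sum_Ioc_consecutive _ (Nat.zero_le m) h, add_sub_cancel_left]

lemma count_le_count (A : Set ℕ) {m n : ℕ} (h : m ≤ n) : count A m ≤ count A n := by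
  have := count_sub_count (A := A) h
  have := Finset.sum_nonneg fun k (_ : k ∈ Finset.Ioc m n) => chiFun_nonneg A k
  linarith

lemma count_nonneg (A : Set ℕ) (n : ℕ) : 0 ≤ count A n :=
  Finset.sum_nonneg fun k _ => chiFun_nonneg A k

lemma count_sub_count_le (A : Set ℕ) {m n : ℕ} (h : m ≤ n) :
    count A n - count A m ≤ n - m := by
  rw [count_sub_count h]
  calc ∑ k ∈ Finset.Ioc m n, chiFun A k ≤ ∑ _k ∈ Finset.Ioc m n, (1 : ℝ) :=
        Finset.sum_le_sum fun k _ => chiFun_le_one A k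
    _ = n - m := by simp [Nat.cast_sub h]

lemma count_succ (A : Set ℕ) (n : ℕ) : count A (n + 1) = count A n + chiFun A (n + 1) := by
  have := count_sub_count (A := A) (Nat.le_succ n)
  rw [Nat.Ioc_succ_singleton, Finset.sum_singleton] at this
  linarith

lemma count_union {A B : Set ℕ} (h : Disjoint A B) (n : ℕ) :
    count (A ∪ B) n = count A n + count B n := by
  simp only [count, chiFun, Set.indicator_union_of_disjoint h, Finset.sum_add_distrib]

lemma count_univ (n : ℕ) : count Set.univ n = n := by
  simp [count, chiFun]

def windowQuot (A : Set ℕ) (θ : ℝ) (n : ℕ) : ℝ :=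
  (count A n - count A ⌊θ * n⌋₊) / (n - ⌊θ * n⌋₊)

lemma floor_mul_le_of_le_one {θ : ℝ} (hθ : θ ≤ 1) (n : ℕ) : ⌊θ * n⌋₊ ≤ n :=
  Nat.floor_le_of_le (by nlinarith [(n.cast_nonneg : (0 : ℝ) ≤ n)])

lemma floor_mul_lt_of_lt_one {θ : ℝ} (hθ : θ < 1) {n : ℕ} (hn : n ≠ 0) : ⌊θ * n⌋₊ < n := by
  rw [Nat.floor_lt' hn]
  have : (0 : ℝ) < n := by positivity
  nlinarith

lemma windowQuot_mem_Icc (A : Set ℕ) {θ : ℝ} (hθ : θ ≤ 1) (n : ℕ) :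
    windowQuot A θ n ∈ Set.Icc 0 1 := by
  have hle := floor_mul_le_of_le_one hθ n
  have hden : (⌊θ * n⌋₊ : ℝ) ≤ n := by exact_mod_cast hle
  have hnum := count_le_count A hle
  exact ⟨div_nonneg (by linarith) (by linarith),
    div_le_one_of_le₀ (count_sub_count_le A hle) (by linarith)⟩

lemma windowQuot_union {A B : Set ℕ} (h : Disjoint A B) (θ : ℝ) (n : ℕ) :
    windowQuot (A ∪ B) θ n = windowQuot A θ n + windowQuot B θ n := by
  simp only [windowQuot, count_union h]
  ring

lemma windowQuot_univ {θ : ℝ} (hθ : θ < 1) {n : ℕ} (hn : n ≠ 0) :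
    windowQuot Set.univ θ n = 1 := by
  have : (⌊θ * n⌋₊ : ℝ) < n := by exact_mod_cast floor_mul_lt_of_lt_one hθ hn
  rw [windowQuot, count_univ, count_univ, div_self (by linarith)]

lemma tendsto_windowQuot {A : Set ℕ} {e θ : ℝ} (hA : HasDensity A e) (hθ0 : 0 < θ) (hθ1 : θ < 1) :
    Tendsto (windowQuot A θ) atTop (𝓝 e) := by
  have hfloor : Tendsto (fun n : ℕ => ⌊θ * n⌋₊) atTop atTop :=
    tendsto_nat_floor_atTop.comp (tendsto_natCast_atTop_atTop.const_mul_atTop hθ0)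
  have hratio : Tendsto (fun n : ℕ => (⌊θ * n⌋₊ : ℝ) / n) atTop (𝓝 θ) :=
    (tendsto_nat_floor_mul_div_atTop hθ0.le).comp tendsto_natCast_atTop_atTop
  have hlower : Tendsto (fun n : ℕ => count A ⌊θ * n⌋₊ / n) atTop (𝓝 (θ * e)) := by
    refine (hratio.mul (hA.comp hfloor)).congr' ?_
    filter_upwards [hfloor.eventually_ge_atTop 1] with n hn
    have : (⌊θ * n⌋₊ : ℝ) ≠ 0 := by positivity
    simp only [Function.comp_apply]
    field_simp
  have hone : Tendsto (fun n : ℕ => (n : ℝ) / n) atTop (𝓝 1) :=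
    tendsto_const_nhds.congr' <| (eventually_ne_atTop 0).mono fun n hn =>
      (div_self (Nat.cast_ne_zero.mpr hn)).symm
  have hquot := ((hA.sub hlower).div (hone.sub hratio) (sub_ne_zero.mpr hθ1.ne'))
  rw [show (e - θ * e) / (1 - θ) = e by field_simp [sub_ne_zero.mpr hθ1.ne']] at hquot
  refine hquot.congr' <| (eventually_ne_atTop 0).mono fun n hn => ?_
  simp only [Pi.div_apply, windowQuot]
  rw [← sub_div, ← sub_div, div_div_div_cancel_right₀ (Nat.cast_ne_zero.mpr hn)]

lemma tendsto_ulim_of_mem_Icc (F : Ultrafilter ℕ) {x : ℕ → ℝ} {a b : ℝ}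
    (hx : ∀ n, x n ∈ Set.Icc a b) : Tendsto x F (𝓝 (ulim F x)) := by
  obtain ⟨L, -, hL⟩ := isCompact_Icc.ultrafilter_le_nhds (F.map x)
    (le_principal_iff.mpr (Filter.mem_map.mpr (Filter.Eventually.of_forall hx)))
  exact tendsto_nhds_limUnder ⟨L, hL⟩

lemma isDensityMeasure_ulim_windowQuot {F : Ultrafilter ℕ} (hF : IsFreeUltrafilter F)
    {θ : ℝ} (hθ0 : 0 < θ) (hθ1 : θ < 1) :
    IsDensityMeasure fun X => ulim F (windowQuot X θ) := by
  have hF' : (F : Filter ℕ) ≤ atTop := hF.trans Nat.cofinite_eq_atTop.le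
  have hlim (X : Set ℕ) : Tendsto (windowQuot X θ) F (𝓝 (ulim F (windowQuot X θ))) :=
    tendsto_ulim_of_mem_Icc F (windowQuot_mem_Icc X hθ1.le)
  refine ⟨fun X Y hXY => ?_, fun X => ?_, ?_, fun X e hX => ?_⟩
  · refine Tendsto.limUnder_eq ?_
    simpa only [← windowQuot_union hXY] using (hlim X).add (hlim Y)
  · exact isClosed_Icc.mem_of_tendsto (hlim X) (Eventually.of_forall (windowQuot_mem_Icc X hθ1.le))
  · refine Tendsto.limUnder_eq (tendsto_const_nhds.congr' ?_)
    filter_upwards [hF' (eventually_ne_atTop 0)] with n hn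
    exact (windowQuot_univ hθ1 hn).symm
  · exact ((tendsto_windowQuot hX hθ0 hθ1).mono_left hF').limUnder_eq

lemma bddBelow_densityMeasure_values (B : Set ℕ) :
    BddBelow {r | ∃ μ, IsDensityMeasure μ ∧ μ B = r} :=
  ⟨0, by rintro r ⟨μ, hμ, rfl⟩; exact (hμ.2.1 B).1⟩

lemma lamLower_le {μ : Set ℕ → ℝ} (hμ : IsDensityMeasure μ) (B : Set ℕ) : lamLower B ≤ μ B :=
  csInf_le (bddBelow_densityMeasure_values B) ⟨μ, hμ, rfl⟩

lemma lamLower_nonneg (B : Set ℕ) : 0 ≤ lamLower B :=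
  Real.sInf_nonneg (by rintro r ⟨μ, hμ, rfl⟩; exact (hμ.2.1 B).1)

lemma lamLower_le_one (B : Set ℕ) : lamLower B ≤ 1 :=
  have hμ := isDensityMeasure_ulim_windowQuot (hyperfilter_le_cofinite (α := ℕ))
    (θ := 1 / 2) (by norm_num) (by norm_num)
  (lamLower_le hμ B).trans (hμ.2.1 B).2

lemma eventually_le_windowQuot {B : Set ℕ} {c θ : ℝ} (hc : c < lamLower B)
    (hθ0 : 0 < θ) (hθ1 : θ < 1) : ∀ᶠ n in atTop, c ≤ windowQuot B θ n := by
  by_contra hbad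
  simp only [not_eventually, not_le] at hbad
  have := frequently_iff_neBot.mp hbad
  obtain ⟨F, hF⟩ := Ultrafilter.exists_le (atTop ⊓ 𝓟 {n | windowQuot B θ n < c})
  have hfree : IsFreeUltrafilter F := (hF.trans inf_le_left).trans Nat.cofinite_eq_atTop.ge
  have hsmall : ∀ᶠ n in (F : Filter ℕ), windowQuot B θ n < c :=
    hF (mem_inf_of_right (mem_principal_self _))
  have hμ := isDensityMeasure_ulim_windowQuot hfree hθ0 hθ1
  have hμB : ulim F (windowQuot B θ) ≤ c :=
    le_of_tendsto (tendsto_ulim_of_mem_Icc F (windowQuot_mem_Icc B hθ1.le))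
      (hsmall.mono fun _ => le_of_lt)
  linarith [lamLower_le hμ B]

lemma le_count_sub_count_of_le_windowQuot {B : Set ℕ} {c θ : ℝ} {N : ℕ} (hc0 : 0 ≤ c)
    (hc1 : c ≤ 1) (hθ : θ < 1) (hN : ∀ n, N < n → c ≤ windowQuot B θ n) {m n : ℕ} (hmn : m ≤ n) :
    c * (n - m) - (1 - θ) * n - N - 1 ≤ count B n - count B m := by
  induction n using Nat.strong_induction_on generalizing m with
  | _ n ih =>
  have hmn' : (m : ℝ) ≤ n := by exact_mod_cast hmn
  have hcount := count_le_count B hmn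
  have hθn : 0 ≤ (1 - θ) * n := mul_nonneg (by linarith) n.cast_nonneg
  rcases le_or_gt n N with hnN | hNn
  · have hN' : (n : ℝ) ≤ N := by exact_mod_cast hnN
    nlinarith [mul_le_mul_of_nonneg_right hc1 (sub_nonneg.mpr hmn')]
  set k := ⌊θ * n⌋₊ with hk_def
  have hkn : k < n := floor_mul_lt_of_lt_one hθ (by omega)
  have hkn' : (k : ℝ) < n := by exact_mod_cast hkn
  have hwindow : c * (n - k) ≤ count B n - count B k := by
    have := hN n hNn
    rwa [windowQuot, ← hk_def, le_div_iff₀ (by linarith)] at this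
  have hwidth : (n : ℝ) - k < (1 - θ) * n + 1 := by
    have := Nat.lt_floor_add_one (θ * n); rw [← hk_def] at this; linarith
  rcases le_or_gt m k with hmk | hkm
  · have hprev := ih k hkn hmk
    have : (1 - θ) * k ≤ (1 - θ) * n := mul_le_mul_of_nonneg_left hkn'.le (by linarith)
    have : c * (n - m) = c * (n - k) + c * (k - m) := by ring
    linarith
  · -- `(m, n]` lies inside the window `(k, n]`, which has fewer than `(1 - θ) n + 1` points
    have hkm' : (k : ℝ) ≤ m := by exact_mod_cast hkm.le
    have := count_sub_count_le B hkm.le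
    have : 0 ≤ c * (m - k) := mul_nonneg hc0 (by linarith)
    have : c * (n - k) = c * (n - m) + c * (m - k) := by ring
    linarith [(N.cast_nonneg : (0 : ℝ) ≤ N)]

open Classical in
/-- The counting function of the greedy subset of `B` whose count never exceeds `d n`. -/
def greedyCount (B : Set ℕ) (d : ℝ) : ℕ → ℝ
  | 0 => 0
  | n + 1 => greedyCount B d n +
      if n + 1 ∈ B ∧ greedyCount B d n + 1 ≤ d * (n + 1) then 1 else 0

def greedySubset (B : Set ℕ) (d : ℝ) : Set ℕ :=
  {k | ∃ n, k = n + 1 ∧ k ∈ B ∧ greedyCount B d n + 1 ≤ d * (n + 1)}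

lemma greedySubset_subset (B : Set ℕ) (d : ℝ) : greedySubset B d ⊆ B := by
  rintro _ ⟨n, rfl, hB, -⟩
  exact hB

lemma count_greedySubset (B : Set ℕ) (d : ℝ) (n : ℕ) :
    count (greedySubset B d) n = greedyCount B d n := by
  induction n with
  | zero => simp [count, greedyCount]
  | succ n ih =>
    have hmem : n + 1 ∈ greedySubset B d ↔
        n + 1 ∈ B ∧ greedyCount B d n + 1 ≤ d * (n + 1) := by
      simp [greedySubset]
    rw [count_succ, ih, greedyCount]
    by_cases h : n + 1 ∈ B ∧ greedyCount B d n + 1 ≤ d * (n + 1) <;>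
      simp [chiFun, hmem, h]

lemma greedyCount_le (B : Set ℕ) {d : ℝ} (hd : 0 ≤ d) (n : ℕ) : greedyCount B d n ≤ d * n := by
  induction n with
  | zero => simp [greedyCount]
  | succ n ih =>
    rw [greedyCount]
    split_ifs with h
    · push_cast; linarith [h.2]
    · push_cast; linarith

lemma greedyCount_le_greedyCount_succ (B : Set ℕ) (d : ℝ) (n : ℕ) :
    greedyCount B d n ≤ greedyCount B d (n + 1) := by
  rw [greedyCount]
  split_ifs <;> linarith

lemma exists_count_sub_le_greedyCount_sub (B : Set ℕ) (d : ℝ) (n : ℕ) :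
    ∃ m ≤ n, d * m - 1 ≤ greedyCount B d m ∧
      count B n - count B m ≤ greedyCount B d n - greedyCount B d m := by
  induction n with
  | zero => exact ⟨0, le_rfl, by simp [greedyCount], by simp⟩
  | succ n ih =>
    by_cases hfull : d * (n + 1 : ℕ) - 1 ≤ greedyCount B d (n + 1)
    · exact ⟨n + 1, le_rfl, hfull, by simp⟩
    obtain ⟨m, hmn, hm, hcount⟩ := ih
    refine ⟨m, hmn.trans n.le_succ, hm, ?_⟩
    -- `n + 1` is taken whenever it lies in `B`, since the greedy set is not nearly full at `n + 1`
    have hroom : greedyCount B d n + 1 ≤ d * (n + 1) := by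
      have := greedyCount_le_greedyCount_succ B d n; push_cast at hfull; linarith
    have hstep : chiFun B (n + 1) ≤ greedyCount B d (n + 1) - greedyCount B d n := by
      rw [greedyCount]
      by_cases hB : n + 1 ∈ B <;> simp [chiFun, hB, hroom]
    rw [count_succ]
    linarith

lemma le_greedyCount {B : Set ℕ} {c d θ : ℝ} {N : ℕ} (hcd : c ≤ d) (hc1 : c ≤ 1) (hθ : θ < 1)
    (hN : ∀ n, N < n → c ≤ windowQuot B θ n) (n : ℕ) :
    c * n - (1 - θ) * n - N - 2 ≤ greedyCount B d n := by
  have hθn : 0 ≤ (1 - θ) * n := mul_nonneg (by linarith) n.cast_nonneg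
  rcases lt_or_ge c 0 with hc0 | hc0
  · have := count_nonneg (greedySubset B d) n
    rw [count_greedySubset] at this
    nlinarith [(n.cast_nonneg : (0 : ℝ) ≤ n)]
  obtain ⟨m, hmn, hm, hcatch⟩ := exists_count_sub_le_greedyCount_sub B d n
  have hB := le_count_sub_count_of_le_windowQuot hc0 hc1 hθ hN hmn
  have : c * m ≤ d * m := mul_le_mul_of_nonneg_right hcd m.cast_nonneg
  have : c * (n - m) = c * n - c * m := by ring
  linarith

lemma hasDensity_greedySubset {B : Set ℕ} {d : ℝ} (hd0 : 0 ≤ d) (hd1 : d ≤ 1)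
    (hB : ∀ c < d, ∀ θ, 0 < θ → θ < 1 → ∀ᶠ n in atTop, c ≤ windowQuot B θ n) :
    HasDensity (greedySubset B d) d := by
  simp only [HasDensity, count_greedySubset]
  refine tendsto_order.2 ⟨fun a ha => ?_, fun a ha => ?_⟩
  · set ε := min (d - a) 1
    have hε : 0 < ε := lt_min (by linarith) one_pos
    have hε1 : ε ≤ 1 := min_le_right _ _
    have haε : a ≤ d - ε := by linarith [min_le_left (d - a) 1]
    obtain ⟨N, hN⟩ := eventually_atTop.mp
      (hB (d - ε / 3) (by linarith) (1 - ε / 3) (by linarith) (by linarith))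
    filter_upwards [tendsto_natCast_atTop_atTop.eventually_gt_atTop (3 * (N + 2) / ε),
      eventually_gt_atTop 0] with n hn hn0
    have hn0' : (0 : ℝ) < n := by exact_mod_cast hn0
    have hlarge : 3 * (N + 2) < n * ε := (div_lt_iff₀ hε).mp hn
    have hG := le_greedyCount (by linarith) (by linarith) (by linarith)
      (fun n hn => hN n hn.le) n (d := d)
    rw [lt_div_iff₀ hn0']
    nlinarith [mul_le_mul_of_nonneg_right haε hn0'.le]
  · filter_upwards [eventually_gt_atTop 0] with n hn
    have hn' : (0 : ℝ) < n := by exact_mod_cast hn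
    exact (div_le_iff₀ hn').2 (greedyCount_le B hd0 n) |>.trans_lt ha

/-- For every `B ⊆ ℕ` there is `A ⊆ B` having asymptotic density with `d(A) = λ̲(B)`. -/
theorem stmt6 (B : Set ℕ) : ∃ A : Set ℕ, A ⊆ B ∧ HasDensity A (lamLower B) :=
  ⟨greedySubset B (lamLower B), greedySubset_subset B _,
    hasDensity_greedySubset (lamLower_nonneg B) (lamLower_le_one B)
      fun _c hc _θ hθ0 hθ1 => eventually_le_windowQuot hc hθ0 hθ1⟩
end
end

section
/- If A, B ⊆ ℕ are disjoint and A has asymptotic density, then d̲_∞(A ∪ B) = d(A) + d̲_∞(B). -/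
open Filter Topology

noncomputable section

/-!
For `α ≥ 0` the weights `k ^ α` increase and `ℕ_α(n) ≍ n ^ (α + 1)`, so Abel summation turns
`A(n) = d n + o(n)` into `A_α(n) = d ℕ_α(n) + o(ℕ_α(n))`; hence `d̲_α(A ∪ B) = d + d̲_α(B)`.
For `0 ≤ α ≤ β`, Abel summation against the decreasing weights `k ^ (α - β)` writes `A_α(n)` and
`ℕ_α(n)` as the same positive combination of the `A_β(k)`, resp. `ℕ_β(k)`, `k ≤ n`, whose mass on
any fixed initial segment is negligible; so `α ↦ d̲_α(B)` is antitone on `[0, ∞)`, and being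
bounded below it converges.
-/

open Finset Asymptotics

theorem sum_Icc_one_mul_by_parts (e g : ℕ → ℝ) (n : ℕ) :
    ∑ k ∈ Icc 1 n, e k * g k =
      (∑ k ∈ Icc 1 n, e k) * g n - ∑ k ∈ Ico 1 n, (∑ i ∈ Icc 1 k, e i) * (g (k + 1) - g k) := by
  induction n with
  | zero => simp
  | succ n ih =>
    rw [sum_Icc_succ_top (by omega), sum_Icc_succ_top (by omega), ih]
    rcases n.eq_zero_or_pos with rfl | hn
    · simp
    · rw [sum_Ico_succ_top hn]; ring

theorem abs_sum_Icc_one_mul_le {e g : ℕ → ℝ} (hg : Monotone g) (hg0 : ∀ k, 0 ≤ g k) {n : ℕ}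
    {M : ℝ} (hM : ∀ k ≤ n, |∑ i ∈ Icc 1 k, e i| ≤ M) :
    |∑ k ∈ Icc 1 n, e k * g k| ≤ 2 * M * g n := by
  have hM0 : 0 ≤ M := by simpa using hM 0 (Nat.zero_le n)
  have htel : ∑ k ∈ Ico 1 n, (g (k + 1) - g k) ≤ g n := by
    rcases n.eq_zero_or_pos with rfl | hn
    · simpa using hg0 0
    · rw [sum_Ico_eq_sub _ hn, sum_range_sub, sum_range_sub]
      linarith [hg0 1]
  rw [sum_Icc_one_mul_by_parts]
  calc _ ≤ |(∑ k ∈ Icc 1 n, e k) * g n|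
        + |∑ k ∈ Ico 1 n, (∑ i ∈ Icc 1 k, e i) * (g (k + 1) - g k)| := abs_sub _ _
    _ ≤ M * g n + ∑ k ∈ Ico 1 n, M * (g (k + 1) - g k) := by
      gcongr
      · rw [abs_mul, abs_of_nonneg (hg0 n)]
        exact mul_le_mul_of_nonneg_right (hM n le_rfl) (hg0 n)
      · refine (abs_sum_le_sum_abs _ _).trans (sum_le_sum fun k hk => ?_)
        have hΔ : 0 ≤ g (k + 1) - g k := sub_nonneg.2 (hg k.le_succ)
        rw [abs_mul, abs_of_nonneg hΔ]
        exact mul_le_mul_of_nonneg_right (hM k (mem_Ico.1 hk).2.le) hΔ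
    _ ≤ 2 * M * g n := by
      rw [← mul_sum]
      linarith [mul_le_mul_of_nonneg_left htel hM0]

theorem eventually_forall_le_abs_le_of_isLittleO {E : ℕ → ℝ}
    (hE : E =o[atTop] (fun n => (n : ℝ))) {ε : ℝ} (hε : 0 < ε) :
    ∀ᶠ n in atTop, ∀ k ≤ n, |E k| ≤ ε * n := by
  obtain ⟨K, hK⟩ := eventually_atTop.1 (hE.def hε)
  set B := ∑ k ∈ range K, |E k|
  have hlarge : ∀ᶠ n : ℕ in atTop, B ≤ ε * n :=
    (tendsto_natCast_atTop_atTop.const_mul_atTop hε).eventually_ge_atTop B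
  filter_upwards [hlarge] with n hn k hk
  rcases lt_or_ge k K with hkK | hKk
  · exact (single_le_sum (fun i _ => abs_nonneg (E i)) (mem_range.2 hkK)).trans hn
  · have := hK k hKk
    simp only [Real.norm_eq_abs, Nat.abs_cast] at this
    exact this.trans (by gcongr)

theorem isLittleO_sum_Icc_one_mul {e g : ℕ → ℝ} (hg : Monotone g) (hg0 : ∀ k, 0 ≤ g k)
    (he : (fun n => ∑ k ∈ Icc 1 n, e k) =o[atTop] (fun n => (n : ℝ)))
    (hG : (fun n => n * g n) =O[atTop] (fun n => ∑ k ∈ Icc 1 n, g k)) :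
    (fun n => ∑ k ∈ Icc 1 n, e k * g k) =o[atTop] (fun n => ∑ k ∈ Icc 1 n, g k) := by
  refine IsLittleO.trans_isBigO ?_ hG
  refine IsLittleO.of_bound fun c hc => ?_
  filter_upwards [eventually_forall_le_abs_le_of_isLittleO he (half_pos hc)] with n hn
  rw [Real.norm_eq_abs, Real.norm_eq_abs, abs_of_nonneg (mul_nonneg n.cast_nonneg (hg0 n))]
  calc _ ≤ 2 * (c / 2 * n) * g n := abs_sum_Icc_one_mul_le hg hg0 hn
    _ = c * (n * g n) := by ring

theorem eventually_mul_le_sum_Icc_one_mul {a b g : ℕ → ℝ} (hg : AntitoneOn g (Set.Ici 1))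
    (hg0 : ∀ k, 0 ≤ g k) (hbg : Tendsto (fun n => ∑ k ∈ Icc 1 n, b k * g k) atTop atTop)
    {m m' : ℝ} (hm : m' < m) (hab : ∀ᶠ n in atTop, m * ∑ k ∈ Icc 1 n, b k ≤ ∑ k ∈ Icc 1 n, a k) :
    ∀ᶠ n in atTop, m' * ∑ k ∈ Icc 1 n, b k * g k ≤ ∑ k ∈ Icc 1 n, a k * g k := by
  obtain ⟨K, hK⟩ := eventually_atTop.1 ((eventually_ge_atTop 1).and hab)
  have hK1 : 1 ≤ K := (hK K le_rfl).1
  set E := fun n => ∑ k ∈ Icc 1 n, (a k - m * b k)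
  have hE : ∀ n, K ≤ n → 0 ≤ E n := fun n hn => by
    simpa [E, sum_sub_distrib, mul_sum] using (hK n hn).2
  set C := ∑ k ∈ Ico 1 K, E k * (g (k + 1) - g k)
  have hC : ∀ n, K ≤ n → -C ≤ ∑ k ∈ Icc 1 n, a k * g k - m * ∑ k ∈ Icc 1 n, b k * g k := by
    intro n hn
    have hparts : ∑ k ∈ Icc 1 n, a k * g k - m * ∑ k ∈ Icc 1 n, b k * g k =
        E n * g n - ∑ k ∈ Ico 1 n, E k * (g (k + 1) - g k) := by
      rw [← sum_Icc_one_mul_by_parts, mul_sum, ← sum_sub_distrib]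
      exact sum_congr rfl fun k _ => by ring
    have htail : ∑ k ∈ Ico K n, E k * (g (k + 1) - g k) ≤ 0 :=
      sum_nonpos fun k hk => mul_nonpos_of_nonneg_of_nonpos (hE k (mem_Ico.1 hk).1) (sub_nonpos.2 <|
        hg (Set.mem_Ici.2 (hK1.trans (mem_Ico.1 hk).1)) (Set.mem_Ici.2 (by omega)) k.le_succ)
    rw [hparts, ← sum_Ico_consecutive _ hK1 hn]
    linarith [mul_nonneg (hE n hn) (hg0 n)]
  filter_upwards [eventually_ge_atTop K,
    (hbg.const_mul_atTop (sub_pos.2 hm)).eventually_ge_atTop C] with n hn hlarge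
  linarith [hC n hn]

theorem monotone_natCast_rpow {β : ℝ} (hβ : 0 ≤ β) : Monotone fun k : ℕ => (k : ℝ) ^ β :=
  fun _ _ h => Real.rpow_le_rpow (Nat.cast_nonneg _) (Nat.cast_le.2 h) hβ

theorem natCast_mul_rpow_le_sum_Icc {β : ℝ} (hβ : 0 ≤ β) (n : ℕ) :
    (n : ℝ) * (n : ℝ) ^ β ≤ (β + 1) * ∑ k ∈ Icc 1 n, (k : ℝ) ^ β := by
  have hint := (Real.monotoneOn_rpow_Ici_of_exponent_nonneg hβ).mono
    (Set.Icc_subset_Ici_self : Set.Icc (0 : ℝ) (0 + n) ⊆ Set.Ici 0) |>.integral_le_sum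
  rw [integral_rpow (Or.inl (by linarith)), Real.zero_rpow (by linarith), zero_add, sub_zero,
    range_eq_Ico, sum_Ico_add' (fun x : ℕ => ((0 : ℝ) + x) ^ β), zero_add,
    Ico_add_one_right_eq_Icc, div_le_iff₀' (by linarith),
    Real.rpow_add_one' n.cast_nonneg (by linarith)] at hint
  simpa [mul_comm] using hint

theorem aSum_univ (α : ℝ) (n : ℕ) : aSum Set.univ α n = ∑ k ∈ Icc 1 n, (k : ℝ) ^ α := by
  simp [aSum, chiFun]

theorem aSum_univ_pos (α : ℝ) {n : ℕ} (hn : 1 ≤ n) : 0 < aSum Set.univ α n := by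
  rw [aSum_univ]
  refine sum_pos (fun k hk => Real.rpow_pos_of_pos ?_ α) ⟨1, by simp [hn]⟩
  exact Nat.cast_pos.2 (mem_Icc.1 hk).1

theorem natCast_le_aSum_univ {α : ℝ} (hα : 0 ≤ α) (n : ℕ) : (n : ℝ) ≤ aSum Set.univ α n := by
  rw [aSum_univ]
  calc (n : ℝ) = ∑ _k ∈ Icc 1 n, (1 : ℝ) := by simp
    _ ≤ _ := sum_le_sum fun k hk =>
      Real.one_le_rpow (by exact_mod_cast (mem_Icc.1 hk).1) hα

theorem sum_Icc_mul_rpow_sub (A : Set ℕ) (α β : ℝ) (n : ℕ) :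
    ∑ k ∈ Icc 1 n, chiFun A k * (k : ℝ) ^ β * (k : ℝ) ^ (α - β) = aSum A α n := by
  refine sum_congr rfl fun k hk => ?_
  rw [mul_assoc, ← Real.rpow_add (Nat.cast_pos.2 (mem_Icc.1 hk).1), add_sub_cancel]

theorem aSum_nonneg (A : Set ℕ) (α : ℝ) (n : ℕ) : 0 ≤ aSum A α n :=
  sum_nonneg fun k _ => mul_nonneg (Set.indicator_nonneg (fun _ _ => zero_le_one) k)
    (Real.rpow_nonneg k.cast_nonneg α)

theorem aSum_le_aSum_univ (A : Set ℕ) (α : ℝ) (n : ℕ) : aSum A α n ≤ aSum Set.univ α n := by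
  refine sum_le_sum fun k _ => mul_le_mul_of_nonneg_right ?_ (Real.rpow_nonneg k.cast_nonneg α)
  by_cases h : k ∈ A <;> simp [chiFun, h]

theorem aSum_union {A B : Set ℕ} (hAB : Disjoint A B) (α : ℝ) (n : ℕ) :
    aSum (A ∪ B) α n = aSum A α n + aSum B α n := by
  simp only [aSum, chiFun, Set.indicator_union_of_disjoint hAB, add_mul, sum_add_distrib]

def aRatio (A : Set ℕ) (α : ℝ) (n : ℕ) : ℝ := aSum A α n / aSum Set.univ α n

theorem aRatio_nonneg (A : Set ℕ) (α : ℝ) (n : ℕ) : 0 ≤ aRatio A α n :=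
  div_nonneg (aSum_nonneg A α n) (aSum_nonneg Set.univ α n)

theorem aRatio_le_one (A : Set ℕ) (α : ℝ) (n : ℕ) : aRatio A α n ≤ 1 :=
  div_le_one_of_le₀ (aSum_le_aSum_univ A α n) (aSum_nonneg Set.univ α n)

theorem aRatio_isBoundedUnder_le (A : Set ℕ) (α : ℝ) :
    IsBoundedUnder (· ≤ ·) atTop (aRatio A α) :=
  isBoundedUnder_of ⟨1, aRatio_le_one A α⟩

theorem aRatio_isBoundedUnder_ge (A : Set ℕ) (α : ℝ) :
    IsBoundedUnder (· ≥ ·) atTop (aRatio A α) :=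
  isBoundedUnder_of ⟨0, aRatio_nonneg A α⟩

theorem lowerADens_eq_liminf (A : Set ℕ) (α : ℝ) :
    lowerADens A α = liminf (aRatio A α) atTop := rfl

theorem lowerADens_nonneg (A : Set ℕ) (α : ℝ) : 0 ≤ lowerADens A α :=
  le_liminf_of_le (aRatio_isBoundedUnder_le A α).isCoboundedUnder_ge
    (Eventually.of_forall (aRatio_nonneg A α))

theorem HasDensity.isLittleO_sum_sub {A : Set ℕ} {d : ℝ} (hd : HasDensity A d) :
    (fun n => ∑ k ∈ Icc 1 n, (chiFun A k - d)) =o[atTop] (fun n => (n : ℝ)) := by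
  refine (isLittleO_iff_tendsto' (Eventually.of_forall fun n hn => ?_)).2 ?_
  · simp [Nat.cast_eq_zero.1 hn]
  · refine (sub_self d ▸ hd.sub_const d).congr' ?_
    filter_upwards [eventually_ne_atTop 0] with n hn
    simp only [sum_sub_distrib, sum_const, Nat.card_Icc, count]
    field_simp
    simp

theorem HasDensity.tendsto_aRatio {A : Set ℕ} {d β : ℝ} (hd : HasDensity A d) (hβ : 0 ≤ β) :
    Tendsto (aRatio A β) atTop (𝓝 d) := by
  have hG : (fun n : ℕ => n * (n : ℝ) ^ β) =O[atTop] (fun n => aSum Set.univ β n) := by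
    refine IsBigO.of_bound (β + 1) (Eventually.of_forall fun n => ?_)
    rw [Real.norm_of_nonneg (by positivity), Real.norm_of_nonneg (aSum_nonneg _ _ _), aSum_univ]
    exact natCast_mul_rpow_le_sum_Icc hβ n
  have hlo := isLittleO_sum_Icc_one_mul (monotone_natCast_rpow hβ)
    (fun k => Real.rpow_nonneg k.cast_nonneg β) hd.isLittleO_sum_sub (by simpa [aSum_univ] using hG)
  refine (zero_add d ▸ hlo.tendsto_div_nhds_zero.add_const d).congr' ?_
  filter_upwards [eventually_ge_atTop 1] with n hn
  rw [← aSum_univ, aRatio, div_add' _ _ _ (aSum_univ_pos β hn).ne']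
  congr 1
  simp only [aSum, sub_mul, sum_sub_distrib, chiFun, Set.indicator_univ, Pi.one_apply, one_mul,
    mul_sum]
  ring

theorem lowerADens_antitoneOn (A : Set ℕ) : AntitoneOn (lowerADens A) (Set.Ici 0) := by
  intro α hα β _ hαβ
  rw [lowerADens_eq_liminf, lowerADens_eq_liminf]
  refine le_of_forall_lt_imp_le_of_dense fun c hc => ?_
  obtain ⟨m, hcm, hm⟩ := exists_between hc
  have hβ : ∀ᶠ n in atTop, m * aSum Set.univ β n ≤ aSum A β n := by
    filter_upwards [eventually_lt_of_lt_liminf hm (aRatio_isBoundedUnder_ge A β),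
      eventually_ge_atTop 1] with n hn h1
    exact ((lt_div_iff₀ (aSum_univ_pos β h1)).1 hn).le
  have hg : AntitoneOn (fun k : ℕ => (k : ℝ) ^ (α - β)) (Set.Ici 1) := fun i hi j _ hij =>
    Real.rpow_le_rpow_of_nonpos (by exact_mod_cast hi) (Nat.cast_le.2 hij) (by linarith)
  have hN : Tendsto (aSum Set.univ α) atTop atTop :=
    tendsto_atTop_mono (natCast_le_aSum_univ hα) tendsto_natCast_atTop_atTop
  have hα' := eventually_mul_le_sum_Icc_one_mul (a := fun k => chiFun A k * (k : ℝ) ^ β)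
    (b := fun k => chiFun Set.univ k * (k : ℝ) ^ β) hg
    (fun k => Real.rpow_nonneg k.cast_nonneg _)
    (by simpa only [sum_Icc_mul_rpow_sub] using hN) hcm hβ
  simp only [sum_Icc_mul_rpow_sub] at hα'
  refine le_liminf_of_le (aRatio_isBoundedUnder_le A α).isCoboundedUnder_ge ?_
  filter_upwards [hα', eventually_ge_atTop 1] with n hn h1
  exact (le_div_iff₀ (aSum_univ_pos α h1)).2 hn

theorem exists_tendsto_lowerADens (A : Set ℕ) : ∃ L, Tendsto (lowerADens A) atTop (𝓝 L) := by
  have hanti : Antitone fun α => lowerADens A (max α 0) := fun α β h =>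
    lowerADens_antitoneOn A (le_max_right α 0) (le_max_right β 0) (max_le_max_right 0 h)
  refine ⟨_, (tendsto_atTop_ciInf hanti ⟨0, ?_⟩).congr' ?_⟩
  · rintro _ ⟨α, rfl⟩
    exact lowerADens_nonneg A _
  · filter_upwards [eventually_ge_atTop 0] with α hα
    rw [max_eq_left hα]

theorem lowerADens_union {A B : Set ℕ} (hAB : Disjoint A B) {d α : ℝ} (hd : HasDensity A d)
    (hα : 0 ≤ α) : lowerADens (A ∪ B) α = d + lowerADens B α := by
  have hA := hd.tendsto_aRatio hα
  have hsplit : aRatio (A ∪ B) α = aRatio A α + aRatio B α :=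
    funext fun n => by simp only [aRatio, aSum_union hAB, add_div, Pi.add_apply]
  rw [lowerADens_eq_liminf, lowerADens_eq_liminf, hsplit]
  have hB := (aRatio_isBoundedUnder_le B α).isCoboundedUnder_ge
  refine le_antisymm ?_ ?_
  · simpa only [hA.limsup_eq] using liminf_add_le hA.isBoundedUnder_ge hA.isBoundedUnder_le
      (aRatio_isBoundedUnder_ge B α) hB
  · simpa only [hA.liminf_eq] using le_liminf_add hA.isBoundedUnder_ge hA.isBoundedUnder_le
      (aRatio_isBoundedUnder_ge B α) hB

/-- If `A` and `B` are disjoint and `A` has asymptotic density `d(A)`, then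
`d̲_∞(A ∪ B) = d(A) + d̲_∞(B)`. -/
theorem stmt8 (A B : Set ℕ) (hAB : Disjoint A B) (d : ℝ) (hd : HasDensity A d) :
    dInftyLower (A ∪ B) = d + dInftyLower B := by
  obtain ⟨L, hB⟩ := exists_tendsto_lowerADens B
  have hAB' : Tendsto (lowerADens (A ∪ B)) atTop (𝓝 (d + L)) :=
    (tendsto_const_nhds.add hB).congr' <| by
      filter_upwards [eventually_ge_atTop 0] with α hα
      exact (lowerADens_union hAB hd hα).symm
  rw [dInftyLower, dInftyLower, hAB'.limUnder_eq, hB.limUnder_eq]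
end
end
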